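/- arXiv:2305.03124 — 9 statements merged into one kernel-verified Lean document; each statement's English description precedes it below -/
import Mathlib

section
/- Let N be a positive natural number, let n ≥ 2 be a natural number, and let B be an N×N real matrix with nonnegative entries such that every row sum of B is at most n−1, and let 0 ≤ λ < 1/(n−1). Then the matrix I − λ·B is invertible, the unique solution a* of a = 𝟙 + λ·B·a equals (I − λ·B)⁻¹·𝟙, and moreover the series ∑_{s=0}^∞ λ^s·B^s·𝟙 converges (in ℝ^N) with a* = ∑_{s=0}^∞ λ^s·B^s·𝟙. In particular, each component of the equilibrium is the sum over s of λ^s times the corresponding entry of B^s·𝟙 (the expected discounted number of walks of length s). -/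
/-!
With nonnegative entries and row sums at most `n - 1`, the row-sum (ℓ∞ operator) norm of `λ • B`
is at most `λ (n - 1) < 1`. Hence the Neumann series `∑ (λ • B)^s` converges to `(1 - λ • B)⁻¹`,
and applying it to `𝟙` gives the walk expansion; the fixed-point equation `a = 𝟙 + λ • B a` is
just `(1 - λ • B) a = 𝟙`.
-/

attribute [local instance] Matrix.linftyOpSeminormedAddCommGroup Matrix.linftyOpNormedRing
  Matrix.linftyOpNormedAlgebra

open Finset Matrix

theorem HasSum.matrix_mulVec {m n X R : Type*} [Fintype n] [NonUnitalNonAssocSemiring R]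
    [TopologicalSpace R] [IsTopologicalSemiring R] {f : X → Matrix m n R} {a : Matrix m n R} (hf : HasSum f a)
    (v : n → R) : HasSum (fun x => f x *ᵥ v) (a *ᵥ v) :=
  hf.map (mulVec.addMonoidHomLeft v) (continuous_id.matrix_mulVec continuous_const)

namespace Matrix

variable {m n R : Type*} [Fintype n]

theorem linfty_opNorm_lt_of_forall_sum_norm_lt [Fintype m] [SeminormedAddCommGroup R]
    {A : Matrix m n R} {r : ℝ} (hr : 0 < r) (h : ∀ i, ∑ j, ‖A i j‖ < r) : ‖A‖ < r := by
  lift r to NNReal using hr.le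
  rw [linfty_opNorm_def, NNReal.coe_lt_coe]
  refine (Finset.sup_lt_iff (by exact_mod_cast hr)).2 fun i _ => ?_
  rw [← NNReal.coe_lt_coe]
  push_cast
  exact h i

variable [DecidableEq n]

theorem eq_add_mulVec_iff [CommRing R] {M : Matrix n n R} (hM : IsUnit (1 - M))
    {a v : n → R} : a = v + M *ᵥ a ↔ a = (1 - M)⁻¹ *ᵥ v := by
  have hdet : IsUnit (1 - M).det := (isUnit_iff_isUnit_det _).1 hM
  calc a = v + M *ᵥ a ↔ (1 - M) *ᵥ a = v := by
        rw [sub_mulVec, one_mulVec, sub_eq_iff_eq_add]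
    _ ↔ a = (1 - M)⁻¹ *ᵥ v := by
        constructor
        · rintro rfl
          rw [mulVec_mulVec, nonsing_inv_mul _ hdet, one_mulVec]
        · rintro rfl
          rw [mulVec_mulVec, mul_nonsing_inv _ hdet, one_mulVec]

theorem hasSum_pow_mulVec {M : Matrix n n ℝ} (hM : ‖M‖ < 1) (v : n → ℝ) :
    HasSum (fun s : ℕ => (M ^ s) *ᵥ v) ((1 - M)⁻¹ *ᵥ v) := by
  rw [nonsing_inv_eq_ringInverse]
  exact (hasSum_geom_series_inverse M hM).matrix_mulVec v

end Matrix

theorem stmt_2_general (N n : ℕ)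
    (B : Matrix (Fin N) (Fin N) ℝ)
    (hBpos : ∀ i j, 0 ≤ B i j)
    (hBrow : ∀ i, ∑ j, B i j ≤ (n : ℝ) - 1)
    (lam : ℝ) (hlam0 : 0 ≤ lam) (hlam1 : lam < 1 / ((n : ℝ) - 1)) :
    IsUnit ((1 : Matrix (Fin N) (Fin N) ℝ) - lam • B) ∧
    (((1 : Matrix (Fin N) (Fin N) ℝ) - lam • B)⁻¹.mulVec (fun _ => (1 : ℝ)) =
        (fun _ => (1 : ℝ)) + lam • B.mulVec
          (((1 : Matrix (Fin N) (Fin N) ℝ) - lam • B)⁻¹.mulVec (fun _ => (1 : ℝ)))) ∧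
    (∀ a : Fin N → ℝ, a = (fun _ => (1 : ℝ)) + lam • B.mulVec a →
        a = ((1 : Matrix (Fin N) (Fin N) ℝ) - lam • B)⁻¹.mulVec (fun _ => (1 : ℝ))) ∧
    HasSum (fun s : ℕ => lam ^ s • (B ^ s).mulVec (fun _ => (1 : ℝ)))
      (((1 : Matrix (Fin N) (Fin N) ℝ) - lam • B)⁻¹.mulVec (fun _ => (1 : ℝ))) := by
  have hlam : lam * ((n : ℝ) - 1) < 1 := by
    rcases le_or_gt ((n : ℝ) - 1) 0 with hn1 | hn1
    · linarith [mul_nonpos_of_nonneg_of_nonpos hlam0 hn1]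
    · exact (lt_div_iff₀ hn1).1 hlam1
  have hnorm : ‖lam • B‖ < 1 := by
    refine linfty_opNorm_lt_of_forall_sum_norm_lt one_pos fun i => ?_
    simp only [Matrix.smul_apply, smul_eq_mul, norm_mul, Real.norm_of_nonneg hlam0,
      Real.norm_of_nonneg (hBpos i _), ← mul_sum]
    exact (mul_le_mul_of_nonneg_left (hBrow i) hlam0).trans_lt hlam
  have hunit := isUnit_one_sub_of_norm_lt_one hnorm
  simp only [← smul_mulVec, ← smul_pow]
  exact ⟨hunit, (eq_add_mulVec_iff hunit).2 rfl, fun a => (eq_add_mulVec_iff hunit).1,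
    hasSum_pow_mulVec hnorm _⟩

/-- Under the same hypotheses (`B` nonnegative with row sums at most `n-1`,
`0 ≤ λ < 1/(n-1)`), the matrix `I - λ • B` is invertible, the unique solution of
`a = 𝟙 + λ • B.mulVec a` is `(I - λ • B)⁻¹ ⬝ 𝟙`, and the Neumann series
`∑ₛ λ^s • (B^s).mulVec 𝟙` converges to it. -/
theorem stmt_2 (N n : ℕ) (hN : 0 < N) (hn : 2 ≤ n)
    (B : Matrix (Fin N) (Fin N) ℝ)
    (hBpos : ∀ i j, 0 ≤ B i j)
    (hBrow : ∀ i, ∑ j, B i j ≤ (n : ℝ) - 1)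
    (lam : ℝ) (hlam0 : 0 ≤ lam) (hlam1 : lam < 1 / ((n : ℝ) - 1)) :
    IsUnit ((1 : Matrix (Fin N) (Fin N) ℝ) - lam • B) ∧
    (((1 : Matrix (Fin N) (Fin N) ℝ) - lam • B)⁻¹.mulVec (fun _ => (1 : ℝ)) =
        (fun _ => (1 : ℝ)) + lam • B.mulVec
          (((1 : Matrix (Fin N) (Fin N) ℝ) - lam • B)⁻¹.mulVec (fun _ => (1 : ℝ)))) ∧
    (∀ a : Fin N → ℝ, a = (fun _ => (1 : ℝ)) + lam • B.mulVec a →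
        a = ((1 : Matrix (Fin N) (Fin N) ℝ) - lam • B)⁻¹.mulVec (fun _ => (1 : ℝ))) ∧
    HasSum (fun s : ℕ => lam ^ s • (B ^ s).mulVec (fun _ => (1 : ℝ)))
      (((1 : Matrix (Fin N) (Fin N) ℝ) - lam • B)⁻¹.mulVec (fun _ => (1 : ℝ))) :=
  stmt_2_general N n B hBpos hBrow lam hlam0 hlam1
end

section
/- Let n ≥ 2 and 1 ≤ n_co ≤ n be natural numbers, set n_p = n − n_co, and let g^cp be the adjacency matrix of the core-periphery network on n vertices with core size n_co. Let λ be a real number such that D := 1 − λ·(n_co − 1) − λ²·n_p·n_co ≠ 0, and define a_co = (1 + λ·n_p)/D and a_p = 1 + λ·n_co·a_co. Then the vector a ∈ ℝ^n whose entries equal a_co on the core vertices and a_p on the peripheral vertices satisfies the complete-information Nash (Katz–Bonacich) system a = 𝟙 + λ·g^cp·a. -/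
/-!
On a vector taking the value `x` on the core and `y` on the periphery, a core row of the
adjacency matrix sums to `(n_co - 1) x + n_p y` and a peripheral row to `n_co x`. The system
thus reduces to two scalar equations: the peripheral one is the definition of `a_p`, and after
substituting it the core one becomes `a_co D = 1 + λ n_p`.
-/

open Finset Matrix

section CorePeriphery

variable {ι R : Type*} [CommRing R] (core : ι → Prop) [DecidablePred core]

def corePeripheryAdj [DecidableEq ι] : Matrix ι ι R :=
  fun i j => if i = j then 0 else if core i ∨ core j then 1 else 0

def corePeripheryVec (x y : R) : ι → R :=
  fun i => if core i then x else y

variable [Fintype ι]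

lemma sum_corePeripheryVec (x y : R) :
    ∑ j, corePeripheryVec core x y j = #{j | core j} * x + #{j | ¬core j} * y := by
  simp only [corePeripheryVec, sum_ite, sum_const, nsmul_eq_mul]

variable [DecidableEq ι]

lemma mulVec_corePeripheryVec_of_core (x y : R) {i : ι} (hi : core i) :
    (corePeripheryAdj core *ᵥ corePeripheryVec core x y) i =
      (#{j | core j} - 1) * x + #{j | ¬core j} * y := by
  have hrow : ∀ j, corePeripheryAdj core i j * corePeripheryVec core x y j =
      corePeripheryVec core x y j - if i = j then x else 0 := by
    intro j
    by_cases hij : i = j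
    · subst hij; simp [corePeripheryAdj, corePeripheryVec, hi]
    · simp [corePeripheryAdj, hij, hi]
  simp only [mulVec, dotProduct, hrow, sum_sub_distrib, sum_corePeripheryVec, sum_ite_eq,
    mem_univ, if_true]
  ring

lemma mulVec_corePeripheryVec_of_not_core (x y : R) {i : ι} (hi : ¬core i) :
    (corePeripheryAdj core *ᵥ corePeripheryVec core x y) i = #{j | core j} * x := by
  have hrow : ∀ j, corePeripheryAdj core i j * corePeripheryVec core x y j =
      if core j then x else 0 := by
    intro j
    by_cases hj : core j
    · have hij : i ≠ j := fun h => hi (h ▸ hj)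
      simp [corePeripheryAdj, corePeripheryVec, hij, hj]
    · simp [corePeripheryAdj, corePeripheryVec, hi, hj]
  simp only [mulVec, dotProduct, hrow, sum_ite, sum_const, nsmul_eq_mul, mul_zero, add_zero]

end CorePeriphery

lemma card_filter_val_not_lt {n m : ℕ} : #{i : Fin n | ¬(i : ℕ) < m} = n - m := by
  have := card_filter_add_card_filter_not (s := (univ : Finset (Fin n))) (fun i => (i : ℕ) < m)
  rw [Fin.card_filter_val_lt, card_univ, Fintype.card_fin] at this
  omega

lemma katzBonacich_core_eq {K : Type*} [Field K] {lam n_co n_p D a_co a_p : K}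
    (hD : D = 1 - lam * (n_co - 1) - lam ^ 2 * n_p * n_co) (hD0 : D ≠ 0)
    (hco : a_co = (1 + lam * n_p) / D) (hp : a_p = 1 + lam * n_co * a_co) :
    a_co = 1 + lam * ((n_co - 1) * a_co + n_p * a_p) := by
  have hcoD : a_co * D = 1 + lam * n_p := by rw [hco, div_mul_cancel₀ _ hD0]
  rw [hp]
  linear_combination hcoD - a_co * hD

theorem stmt_3_general (n n_co : ℕ) (h2 : n_co ≤ n)
    (lam : ℝ)
    (g : Matrix (Fin n) (Fin n) ℝ)
    (hg : ∀ i j : Fin n, g i j =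
      if i = j then 0 else if (i : ℕ) < n_co ∨ (j : ℕ) < n_co then 1 else 0)
    (D a_co a_p : ℝ)
    (hD : D = 1 - lam * ((n_co : ℝ) - 1) - lam ^ 2 * ((n : ℝ) - (n_co : ℝ)) * (n_co : ℝ))
    (hD0 : D ≠ 0)
    (hco : a_co = (1 + lam * ((n : ℝ) - (n_co : ℝ))) / D)
    (hp : a_p = 1 + lam * (n_co : ℝ) * a_co)
    (a : Fin n → ℝ)
    (ha : ∀ i : Fin n, a i = if (i : ℕ) < n_co then a_co else a_p) :
    a = (fun _ => (1 : ℝ)) + lam • g.mulVec a := by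
  have hg : g = corePeripheryAdj (fun i : Fin n => (i : ℕ) < n_co) := Matrix.ext hg
  have ha : a = corePeripheryVec (fun i : Fin n => (i : ℕ) < n_co) a_co a_p := funext ha
  have hcore : (#{i : Fin n | (i : ℕ) < n_co} : ℝ) = n_co := by
    rw [Fin.card_filter_val_lt, min_eq_right h2]
  have hperi : (#{i : Fin n | ¬(i : ℕ) < n_co} : ℝ) = n - n_co := by
    rw [card_filter_val_not_lt, Nat.cast_sub h2]
  subst hg ha
  funext i
  set core : Fin n → Prop := fun i => (i : ℕ) < n_co
  by_cases hi : (i : ℕ) < n_co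
  · rw [Pi.add_apply, Pi.smul_apply, mulVec_corePeripheryVec_of_core core _ _ hi, hcore, hperi,
      smul_eq_mul, corePeripheryVec, if_pos hi]
    exact katzBonacich_core_eq hD hD0 hco hp
  · rw [Pi.add_apply, Pi.smul_apply, mulVec_corePeripheryVec_of_not_core core _ _ hi, hcore,
      smul_eq_mul, corePeripheryVec, if_neg hi, hp]
    ring

/-- On the core-periphery network with core size `n_co` (core vertices are
linked to everyone else; peripheral vertices are linked exactly to the core), the
vector taking value `a_co = (1 + λ n_p)/D` on the core (with
`D = 1 - λ(n_co - 1) - λ² n_p n_co ≠ 0`) and `a_p = 1 + λ n_co a_co` on the periphery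
solves the Katz–Bonacich system `a = 𝟙 + λ • g.mulVec a`. -/
theorem stmt_3 (n n_co : ℕ) (hn : 2 ≤ n) (h1 : 1 ≤ n_co) (h2 : n_co ≤ n)
    (lam : ℝ)
    (g : Matrix (Fin n) (Fin n) ℝ)
    (hg : ∀ i j : Fin n, g i j =
      if i = j then 0 else if (i : ℕ) < n_co ∨ (j : ℕ) < n_co then 1 else 0)
    (D a_co a_p : ℝ)
    (hD : D = 1 - lam * ((n_co : ℝ) - 1) - lam ^ 2 * ((n : ℝ) - (n_co : ℝ)) * (n_co : ℝ))
    (hD0 : D ≠ 0)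
    (hco : a_co = (1 + lam * ((n : ℝ) - (n_co : ℝ))) / D)
    (hp : a_p = 1 + lam * (n_co : ℝ) * a_co)
    (a : Fin n → ℝ)
    (ha : ∀ i : Fin n, a i = if (i : ℕ) < n_co then a_co else a_p) :
    a = (fun _ => (1 : ℝ)) + lam • g.mulVec a :=
  stmt_3_general n n_co h2 lam g hg D a_co a_p hD hD0 hco hp a ha
end

section
/- Let n ≥ 4 and let λ be real with 1 − λ·Z − λ²·Y ≠ 0. Define a_C = (1 + λ·X)/(1 − λ·Z − λ²·Y) and, for each k ∈ {1, …, n−2}, a_{P_k} = 1 + λ·k·a_C. Then a_C satisfies the core agent's interim best-response equation under the uniform prior over core-periphery networks: a_C = 1 + ((n−1)·λ/Δ)·[ ∑_{k=1}^{n−2} C(n−2, k−1)·a_{P_k} + ( ∑_{k=2}^{n} C(n−2, k−2) − C(n−2, n−3) )·a_C ]. (Together with a_{P_k} = 1 + λ·k·a_C, this is the Bayesian–Nash equilibrium when the prior is uniform over all core-periphery networks on n vertices.) -/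
/-! Substituting `a_{P_k} = 1 + λ k a_C` turns the right-hand side of the best-response equation
into the affine map `a ↦ 1 + λX + (λZ + λ²Y) a` evaluated at `a_C`, and `a_C` is by definition the
fixed point of that map. -/

theorem Finset.sum_mul_one_add_mul {ι R : Type*} [CommRing R] (s : Finset ι) (w f a : ι → R) (c : R)
    (ha : ∀ k ∈ s, a k = 1 + c * f k) :
    ∑ k ∈ s, w k * a k = ∑ k ∈ s, w k + c * ∑ k ∈ s, f k * w k := by
  rw [Finset.mul_sum, ← Finset.sum_add_distrib]
  refine Finset.sum_congr rfl fun k hk => ?_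
  rw [ha k hk]
  ring

theorem eq_one_add_of_eq_div_one_sub {K : Type*} [Field K] {lam X Y Z a : K} (hden : 1 - lam * Z - lam ^ 2 * Y ≠ 0)
    (ha : a = (1 + lam * X) / (1 - lam * Z - lam ^ 2 * Y)) :
    a = 1 + lam * X + lam * Z * a + lam ^ 2 * Y * a := by
  rw [eq_div_iff hden] at ha
  linear_combination ha

theorem stmt_4_general (n : ℕ) (lam : ℝ)
    (Δ X Y Z : ℝ)
    (hX : X = ((n : ℝ) - 1) * (∑ k ∈ Finset.Icc 1 (n - 2), ((n - 2).choose (k - 1) : ℝ)) / Δ)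
    (hY : Y = ((n : ℝ) - 1) * (∑ k ∈ Finset.Icc 1 (n - 2), (k : ℝ) * ((n - 2).choose (k - 1) : ℝ)) / Δ)
    (hZ : Z = ((n : ℝ) - 1) *
      ((∑ k ∈ Finset.Icc 2 n, ((n - 2).choose (k - 2) : ℝ)) - ((n - 2).choose (n - 3) : ℝ)) / Δ)
    (hden : 1 - lam * Z - lam ^ 2 * Y ≠ 0)
    (aC : ℝ) (haC : aC = (1 + lam * X) / (1 - lam * Z - lam ^ 2 * Y))
    (aP : ℕ → ℝ) (haP : ∀ k ∈ Finset.Icc 1 (n - 2), aP k = 1 + lam * (k : ℝ) * aC) :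
    aC = 1 + ((n : ℝ) - 1) * lam / Δ *
      ((∑ k ∈ Finset.Icc 1 (n - 2), ((n - 2).choose (k - 1) : ℝ) * aP k) +
        ((∑ k ∈ Finset.Icc 2 n, ((n - 2).choose (k - 2) : ℝ)) - ((n - 2).choose (n - 3) : ℝ)) * aC) := by
  have hfixed := eq_one_add_of_eq_div_one_sub hden haC
  rw [Finset.sum_mul_one_add_mul (Finset.Icc 1 (n - 2)) (fun k => ((n - 2).choose (k - 1) : ℝ))
    (fun k => (k : ℝ)) aP (lam * aC) fun k hk => by rw [haP k hk]; ring]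
  subst hX hY hZ
  linear_combination hfixed

/-- With `Δ, X, Y, Z` the interim expectations under the uniform prior over
core-periphery networks on `n ≥ 4` vertices, the core action
`a_C = (1 + λX)/(1 - λZ - λ²Y)` together with `a_{P_k} = 1 + λ k a_C` satisfies the
core agent's interim best-response equation. -/
theorem stmt_4 (n : ℕ) (hn : 4 ≤ n) (lam : ℝ)
    (Δ X Y Z : ℝ)
    (hΔ : Δ = 2 ^ (n - 1) - ((n : ℝ) - 1))
    (hX : X = ((n : ℝ) - 1) * (∑ k ∈ Finset.Icc 1 (n - 2), ((n - 2).choose (k - 1) : ℝ)) / Δ)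
    (hY : Y = ((n : ℝ) - 1) * (∑ k ∈ Finset.Icc 1 (n - 2), (k : ℝ) * ((n - 2).choose (k - 1) : ℝ)) / Δ)
    (hZ : Z = ((n : ℝ) - 1) *
      ((∑ k ∈ Finset.Icc 2 n, ((n - 2).choose (k - 2) : ℝ)) - ((n - 2).choose (n - 3) : ℝ)) / Δ)
    (hden : 1 - lam * Z - lam ^ 2 * Y ≠ 0)
    (aC : ℝ) (haC : aC = (1 + lam * X) / (1 - lam * Z - lam ^ 2 * Y))
    (aP : ℕ → ℝ) (haP : ∀ k ∈ Finset.Icc 1 (n - 2), aP k = 1 + lam * (k : ℝ) * aC) :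
    aC = 1 + ((n : ℝ) - 1) * lam / Δ *
      ((∑ k ∈ Finset.Icc 1 (n - 2), ((n - 2).choose (k - 1) : ℝ) * aP k) +
        ((∑ k ∈ Finset.Icc 2 n, ((n - 2).choose (k - 2) : ℝ)) - ((n - 2).choose (n - 3) : ℝ)) * aC) :=
  stmt_4_general n lam Δ X Y Z hX hY hZ hden aC haC aP haP
end

section
/- Let n ≥ 7 be a natural number and let λ be a real number with 0 ≤ λ ≤ 1/(n−1). Then Y + (n/2)·Z − X·(n/2 − 1) − n²/4 + λ·(n/2)·(Y − (n/2)·X) > 0. (Equivalently, this quantity equals (n−2)·(2^n − 2n·(1+λ)·(n−1)) / (4·(2 + 2^n − 2n)), which is strictly positive for all n ≥ 7 and λ ≤ 1/(n−1).) -/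
open Finset

/-!
Summing the binomial coefficients gives `∑ C(n-2, k-1) = 2^(n-2) - 1`,
`∑ k C(n-2, k-1) = n 2^(n-3) - (n-1)` and `∑ C(n-2, k-2) = 2^(n-2)`, after which the expression is
`(n-2)(2^n - 2n(n-1)(1+λ)) / (4(2 + 2^n - 2n))`. Since `λ(n-1) ≤ 1`, the second factor of the
numerator is at least `2^n - 2n²`, which is positive once `n ≥ 7`.
-/

theorem sum_Icc_one_choose_pred (m : ℕ) : ∑ k ∈ Icc 1 m, m.choose (k - 1) + 1 = 2 ^ m := by
  rw [← Ico_add_one_right_eq_Icc, sum_Ico_eq_sum_range, ← Nat.sum_range_choose, sum_range_succ,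
    Nat.choose_self]
  simp

theorem sum_Icc_one_mul_choose_pred (m : ℕ) :
    2 * ∑ k ∈ Icc 1 m, k * m.choose (k - 1) + 2 * (m + 1) = (m + 2) * 2 ^ m := by
  have hshift : ∑ k ∈ Icc 1 m, k * m.choose (k - 1) + (m + 1)
      = ∑ j ∈ range (m + 1), (j + 1) * m.choose j := by
    rw [sum_range_succ, Nat.choose_self, ← Ico_add_one_right_eq_Icc, sum_Ico_eq_sum_range]
    simp [add_comm]
  have hsplit : ∑ j ∈ range (m + 1), (j + 1) * m.choose j = m * 2 ^ (m - 1) + 2 ^ m := by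
    simp only [add_mul, one_mul, sum_add_distrib, Nat.sum_range_mul_choose, Nat.sum_range_choose]
  rcases m with _ | m
  · simp
  · rw [← mul_add, hshift, hsplit, Nat.add_sub_cancel, pow_succ]
    ring

theorem sum_Icc_two_choose_sub_two (m : ℕ) : ∑ k ∈ Icc 2 (m + 2), m.choose (k - 2) = 2 ^ m := by
  rw [← Ico_add_one_right_eq_Icc, sum_Ico_eq_sum_range, ← Nat.sum_range_choose]
  simp

theorem two_mul_sq_lt_two_pow {n : ℕ} (hn : 7 ≤ n) : 2 * n ^ 2 < 2 ^ n := by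
  induction n, hn using Nat.le_induction with
  | base => norm_num
  | succ k hk ih => rw [pow_succ 2 k]; nlinarith

theorem expression_eq_of_closed_forms {N P lam Δ X Y Z : ℝ} (hΔ : Δ = P / 2 - (N - 1))
    (hΔ0 : Δ ≠ 0) (hX : X = (N - 1) * (P / 4 - 1) / Δ)
    (hY : Y = (N - 1) * (N * P / 8 - (N - 1)) / Δ) (hZ : Z = (N - 1) * (P / 4 - (N - 2)) / Δ) :
    Y + (N / 2) * Z - X * (N / 2 - 1) - N ^ 2 / 4 + lam * (N / 2) * (Y - (N / 2) * X)
      = (N - 2) * (P - 2 * N * (N - 1) * (1 + lam)) / (4 * (2 + P - 2 * N)) := by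
  have hden : 2 + P - 2 * N = 2 * Δ := by rw [hΔ]; ring
  subst hX hY hZ
  rw [hden]
  field_simp
  rw [hΔ]
  ring

theorem closed_form_pos {N P lam : ℝ} (hN : 2 < N) (hP : 2 * N ^ 2 < P)
    (hlam : lam * (N - 1) ≤ 1) :
    0 < (N - 2) * (P - 2 * N * (N - 1) * (1 + lam)) / (4 * (2 + P - 2 * N)) := by
  have hbound : N * (N - 1) * (1 + lam) ≤ N ^ 2 := by nlinarith
  exact div_pos (mul_pos (by linarith) (by linarith)) (by nlinarith)

theorem stmt_9_general (n : ℕ) (hn : 7 ≤ n) (lam : ℝ)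
    (hlam1 : lam ≤ 1 / ((n : ℝ) - 1))
    (Δ X Y Z : ℝ)
    (hΔ : Δ = 2 ^ (n - 1) - ((n : ℝ) - 1))
    (hX : X = ((n : ℝ) - 1) * (∑ k ∈ Finset.Icc 1 (n - 2), ((n - 2).choose (k - 1) : ℝ)) / Δ)
    (hY : Y = ((n : ℝ) - 1) * (∑ k ∈ Finset.Icc 1 (n - 2), (k : ℝ) * ((n - 2).choose (k - 1) : ℝ)) / Δ)
    (hZ : Z = ((n : ℝ) - 1) *
      ((∑ k ∈ Finset.Icc 2 n, ((n - 2).choose (k - 2) : ℝ)) - ((n - 2).choose (n - 3) : ℝ)) / Δ) :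
    Y + ((n : ℝ) / 2) * Z - X * ((n : ℝ) / 2 - 1) - (n : ℝ) ^ 2 / 4 +
      lam * ((n : ℝ) / 2) * (Y - ((n : ℝ) / 2) * X) > 0 := by
  have hN : (2 : ℝ) < n := by exact_mod_cast (by omega : 2 < n)
  have hP : 2 * (n : ℝ) ^ 2 < 2 ^ n := by exact_mod_cast two_mul_sq_lt_two_pow hn
  have hlam : lam * ((n : ℝ) - 1) ≤ 1 := (le_div_iff₀ (by linarith)).mp hlam1
  obtain ⟨m, rfl⟩ : ∃ m, n = m + 2 := ⟨n - 2, by omega⟩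
  rw [show m + 2 - 1 = m + 1 by omega] at hΔ
  rw [Nat.add_sub_cancel] at hX hY hZ
  rw [show m + 2 - 3 = m - 1 by omega, Nat.choose_symm (by omega), Nat.choose_one_right] at hZ
  have hA : ∑ k ∈ Icc 1 m, (m.choose (k - 1) : ℝ) + 1 = 2 ^ m := by
    exact_mod_cast sum_Icc_one_choose_pred m
  have hB : 2 * ∑ k ∈ Icc 1 m, (k : ℝ) * m.choose (k - 1) + 2 * ((m : ℝ) + 1)
      = ((m : ℝ) + 2) * 2 ^ m := by
    exact_mod_cast sum_Icc_one_mul_choose_pred m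
  have hC : ∑ k ∈ Icc 2 (m + 2), (m.choose (k - 2) : ℝ) = 2 ^ m := by
    exact_mod_cast sum_Icc_two_choose_sub_two m
  push_cast at *
  have hΔ' : Δ = 2 ^ (m + 2) / 2 - ((m : ℝ) + 2 - 1) := by rw [hΔ]; ring
  have hΔ0 : Δ ≠ 0 := by rw [hΔ']; nlinarith
  rw [gt_iff_lt,
    expression_eq_of_closed_forms hΔ' hΔ0 (by rw [hX]; congr 2; linear_combination hA)
    (by rw [hY]; congr 2; linear_combination hB / 2) (by rw [hZ]; congr 2; linear_combination hC)]
  exact closed_form_pos hN hP hlam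

/-- For `n ≥ 7` and `0 ≤ λ ≤ 1/(n-1)`,
`Y + (n/2)·Z - X·(n/2 - 1) - n²/4 + λ·(n/2)·(Y - (n/2)·X) > 0`. -/
theorem stmt_9 (n : ℕ) (hn : 7 ≤ n) (lam : ℝ)
    (hlam0 : 0 ≤ lam) (hlam1 : lam ≤ 1 / ((n : ℝ) - 1))
    (Δ X Y Z : ℝ)
    (hΔ : Δ = 2 ^ (n - 1) - ((n : ℝ) - 1))
    (hX : X = ((n : ℝ) - 1) * (∑ k ∈ Finset.Icc 1 (n - 2), ((n - 2).choose (k - 1) : ℝ)) / Δ)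
    (hY : Y = ((n : ℝ) - 1) * (∑ k ∈ Finset.Icc 1 (n - 2), (k : ℝ) * ((n - 2).choose (k - 1) : ℝ)) / Δ)
    (hZ : Z = ((n : ℝ) - 1) *
      ((∑ k ∈ Finset.Icc 2 n, ((n - 2).choose (k - 2) : ℝ)) - ((n - 2).choose (n - 3) : ℝ)) / Δ) :
    Y + ((n : ℝ) / 2) * Z - X * ((n : ℝ) / 2 - 1) - (n : ℝ) ^ 2 / 4 +
      lam * ((n : ℝ) / 2) * (Y - ((n : ℝ) / 2) * X) > 0 :=
  stmt_9_general n hn lam hlam1 Δ X Y Z hΔ hX hY hZ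
end

section
/- Let n ≥ 2 be a natural number and let λ be a real number with 0 ≤ λ < 1/(n−1) (so that 1 − n·λ/2 > 0). For d ∈ {0, 1, …, n−1} define a(d) = 1 + λ·d/(1 − n·λ/2). Then a satisfies the system of interim best responses under the uniform prior over all graphs on n vertices: for every d ∈ {0, 1, …, n−1}, a(d) = 1 + λ·d·(1/2^(n−2))·∑_{d'=1}^{n−1} C(n−2, d'−1)·a(d'). (Hence under the uniform prior, the Bayesian–Nash equilibrium action of an agent of degree d in the realized network is 1 + λd/(1 − nλ/2).) -/
/-!
For an affine profile `a d = 1 + c * d`, the right-hand side of the best-response system only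
involves the binomial moments `∑ C(m, k) = 2 ^ m` and `∑ k C(m, k) = m 2 ^ (m - 1)`, where
`m = n - 2`; it equals `1 + λ d (1 + c n / 2)`. So the affine profile is a solution exactly when
`c = λ (1 + c n / 2)`, i.e. `c (1 - n λ / 2) = λ`, and `1 - n λ / 2 > 0` because `λ (n - 1) < 1`.
-/

open Finset

lemma sum_Icc_one_eq_sum_range {M : Type*} [AddCommMonoid M] (n : ℕ) (f : ℕ → M) :
    ∑ d ∈ Icc 1 n, f d = ∑ k ∈ range n, f (k + 1) := by
  rw [range_eq_Ico, sum_Ico_add', zero_add, Ico_add_one_right_eq_Icc]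

lemma two_mul_sum_range_mul_choose (m : ℕ) :
    2 * ∑ k ∈ range (m + 1), (k : ℝ) * m.choose k = m * 2 ^ m := by
  have h := congrArg (fun x : ℕ => (2 * x : ℝ)) (Nat.sum_range_mul_choose m)
  push_cast at h
  rw [h]
  rcases m with _ | m
  · simp
  · rw [Nat.add_sub_cancel, pow_succ]; ring

lemma sum_range_choose_mul_affine (m : ℕ) (c : ℝ) :
    ∑ k ∈ range (m + 1), (m.choose k : ℝ) * (1 + c * (k + 1 : ℕ)) =
      2 ^ m * (1 + c * (m + 2) / 2) := by
  have hchoose : ∑ k ∈ range (m + 1), (m.choose k : ℝ) = 2 ^ m := by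
    exact_mod_cast Nat.sum_range_choose m
  have hmul := two_mul_sum_range_mul_choose m
  calc ∑ k ∈ range (m + 1), (m.choose k : ℝ) * (1 + c * (k + 1 : ℕ))
      = (1 + c) * ∑ k ∈ range (m + 1), (m.choose k : ℝ)
          + c * ∑ k ∈ range (m + 1), (k : ℝ) * m.choose k := by
        rw [mul_sum, mul_sum, ← sum_add_distrib]
        refine sum_congr rfl fun k _ => ?_
        push_cast; ring
    _ = 2 ^ m * (1 + c * (m + 2) / 2) := by
        rw [hchoose]; linear_combination c / 2 * hmul

lemma affine_solves_best_response (m : ℕ) (lam c : ℝ)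
    (hc : c * (1 - (m + 2) * lam / 2) = lam) (d : ℕ) :
    1 + c * d = 1 + lam * d * (1 / 2 ^ m) *
      ∑ d' ∈ Icc 1 (m + 1), (m.choose (d' - 1) : ℝ) * (1 + c * d') := by
  rw [sum_Icc_one_eq_sum_range]
  simp only [Nat.add_sub_cancel]
  rw [sum_range_choose_mul_affine]
  field_simp
  linear_combination (2 * d : ℝ) * hc

/-- Proposition 2: Under the uniform prior over all graphs on `n`
vertices and `0 ≤ λ < 1/(n-1)`, the degree-based profile
`a(d) = 1 + λd/(1 - nλ/2)` satisfies the interim best-response system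
`a(d) = 1 + λ·d·(1/2^(n-2))·∑_{d'=1}^{n-1} C(n-2, d'-1)·a(d')` for every
`d ∈ {0, …, n-1}`. -/
theorem stmt_12 (n : ℕ) (hn : 2 ≤ n)
    (lam : ℝ) (hlam0 : 0 ≤ lam) (hlam1 : lam < 1 / ((n : ℝ) - 1))
    (a : ℕ → ℝ)
    (ha : ∀ d, a d = 1 + lam * (d : ℝ) / (1 - (n : ℝ) * lam / 2)) :
    ∀ d ∈ Finset.range n,
      a d = 1 + lam * (d : ℝ) * (1 / 2 ^ (n - 2)) *
        ∑ d' ∈ Finset.Icc 1 (n - 1), ((n - 2).choose (d' - 1) : ℝ) * a d' := by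
  obtain ⟨m, rfl⟩ : ∃ m, n = m + 2 := ⟨n - 2, by omega⟩
  intro d _
  push_cast at hlam1 ha
  have hlam : lam * (m + 1) < 1 := by
    rwa [show (m : ℝ) + 2 - 1 = m + 1 by ring, lt_div_iff₀ (by positivity)] at hlam1
  have hD : 0 < 1 - (m + 2) * lam / 2 := by linarith [mul_nonneg (Nat.cast_nonneg m) hlam0]
  obtain ⟨c, hc, ha'⟩ : ∃ c, c * (1 - (m + 2) * lam / 2) = lam ∧ ∀ k, a k = 1 + c * k :=
    ⟨_, div_mul_cancel₀ lam hD.ne', fun k => by rw [ha]; ring⟩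
  simp only [ha', show m + 2 - 1 = m + 1 by omega, Nat.add_sub_cancel]
  exact affine_solves_best_response m lam c hc d
end

section
/- Let n ≥ 2 be a natural number, p ∈ [0,1], and let λ be a real number with 0 ≤ λ < 1/(n−1) (so that 1 − λ·((n−2)·p + 1) > 0). For d ∈ {0, 1, …, n−1} define a(d) = 1 + λ·d/(1 − λ·((n−2)·p + 1)). Then a satisfies the system of interim best responses under Erdos–Renyi link formation with parameter p: for every d ∈ {0,1,…,n−1}, a(d) = 1 + λ·d·∑_{d'=1}^{n−1} C(n−2, d'−1)·p^(d'−1)·(1−p)^(n−1−d')·a(d'). (Hence the Bayesian–Nash equilibrium action of an agent of degree d equals 1 + λd/(1 − λ((n−2)p+1)).) -/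
/-!
A neighbour's degree is `1 + Binomial(n - 2, p)`, so its mean is `(n - 2) p + 1`. Hence for an
affine profile `a d = 1 + c d` the right-hand side is `1 + λ d (1 + c ((n - 2) p + 1))`, and
`c = λ / (1 - λ ((n - 2) p + 1))` is exactly the value making `λ (1 + c ((n - 2) p + 1)) = c`.
-/

open Finset

variable {R : Type*} [CommRing R]

theorem sum_range_choose_mul_pow_mul_one_sub_pow (m : ℕ) (p : R) :
    ∑ i ∈ range (m + 1), (m.choose i : R) * p ^ i * (1 - p) ^ (m - i) = 1 := by
  simpa [bernsteinPolynomial, Polynomial.eval_finsetSum] using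
    congrArg (Polynomial.eval p) (bernsteinPolynomial.sum R m)

theorem sum_range_mul_choose_mul_pow_mul_one_sub_pow (m : ℕ) (p : R) :
    ∑ i ∈ range (m + 1), (i : R) * ((m.choose i : R) * p ^ i * (1 - p) ^ (m - i)) = m * p := by
  simpa [bernsteinPolynomial, Polynomial.eval_finsetSum, mul_assoc] using
    congrArg (Polynomial.eval p) (bernsteinPolynomial.sum_smul R m)

theorem sum_Icc_choose_pred_mul_pow_eq_sum_range (m : ℕ) (p : R) (f : ℕ → R) :
    ∑ d ∈ Icc 1 (m + 1), (m.choose (d - 1) : R) * p ^ (d - 1) * (1 - p) ^ (m + 1 - d) * f d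
      = ∑ i ∈ range (m + 1), (m.choose i : R) * p ^ i * (1 - p) ^ (m - i) * f (i + 1) := by
  rw [← Ico_add_one_right_eq_Icc, sum_Ico_eq_sum_range]
  refine sum_congr rfl fun i _ => ?_
  rw [add_comm 1 i, Nat.add_sub_cancel, Nat.add_sub_add_right]

theorem sum_Icc_choose_pred_mul_pow_mul_affine (m : ℕ) (p c : R) :
    ∑ d ∈ Icc 1 (m + 1),
        (m.choose (d - 1) : R) * p ^ (d - 1) * (1 - p) ^ (m + 1 - d) * (1 + c * d)
      = 1 + c * (m * p + 1) := by
  set w : ℕ → R := fun i => (m.choose i : R) * p ^ i * (1 - p) ^ (m - i)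
  have hsplit : ∀ i, w i * (1 + c * ((i + 1 : ℕ) : R)) = (1 + c) * w i + c * ((i : R) * w i) := by
    intro i; push_cast; ring
  rw [sum_Icc_choose_pred_mul_pow_eq_sum_range m p (fun d => 1 + c * d)]
  simp only [hsplit, sum_add_distrib, ← mul_sum, w, sum_range_choose_mul_pow_mul_one_sub_pow,
    sum_range_mul_choose_mul_pow_mul_one_sub_pow]
  ring

theorem stmt_14_general (n : ℕ) (hn : 2 ≤ n)
    (p : ℝ) (hp1 : p ≤ 1)
    (lam : ℝ) (hlam0 : 0 ≤ lam) (hlam1 : lam < 1 / ((n : ℝ) - 1))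
    (a : ℕ → ℝ)
    (ha : ∀ d, a d = 1 + lam * (d : ℝ) / (1 - lam * (((n : ℝ) - 2) * p + 1))) :
    ∀ d ∈ Finset.range n,
      a d = 1 + lam * (d : ℝ) *
        ∑ d' ∈ Finset.Icc 1 (n - 1),
          ((n - 2).choose (d' - 1) : ℝ) * p ^ (d' - 1) * (1 - p) ^ (n - 1 - d') * a d' := by
  intro d _
  obtain ⟨m, rfl⟩ : ∃ m, n = m + 2 := ⟨n - 2, by omega⟩
  have hcast : ((m + 2 : ℕ) : ℝ) - 2 = m := by push_cast; ring
  set D := 1 - lam * (m * p + 1)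
  have hD : 0 < D := by
    have hlam : lam * (m + 1) < 1 := by
      rw [lt_div_iff₀ (by push_cast; linarith)] at hlam1; push_cast at hlam1; linarith
    nlinarith [mul_le_mul_of_nonneg_left hp1 (mul_nonneg hlam0 m.cast_nonneg)]
  have ha' : ∀ d, a d = 1 + lam / D * d := fun d => by rw [ha, hcast, mul_div_right_comm]
  simp only [ha', Nat.add_sub_cancel, show m + 2 - 1 = m + 1 by omega,
    sum_Icc_choose_pred_mul_pow_mul_affine]
  field_simp
  ring

/-- Under Erdos–Renyi link formation with parameter `p ∈ [0,1]` and
`0 ≤ λ < 1/(n-1)`, the profile `a(d) = 1 + λd/(1 - λ((n-2)p + 1))` satisfies the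
interim best-response system
`a(d) = 1 + λ·d·∑_{d'=1}^{n-1} C(n-2,d'-1)·p^(d'-1)·(1-p)^(n-1-d')·a(d')`
for every `d ∈ {0, …, n-1}`. -/
theorem stmt_14 (n : ℕ) (hn : 2 ≤ n)
    (p : ℝ) (hp0 : 0 ≤ p) (hp1 : p ≤ 1)
    (lam : ℝ) (hlam0 : 0 ≤ lam) (hlam1 : lam < 1 / ((n : ℝ) - 1))
    (a : ℕ → ℝ)
    (ha : ∀ d, a d = 1 + lam * (d : ℝ) / (1 - lam * (((n : ℝ) - 2) * p + 1))) :
    ∀ d ∈ Finset.range n,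
      a d = 1 + lam * (d : ℝ) *
        ∑ d' ∈ Finset.Icc 1 (n - 1),
          ((n - 2).choose (d' - 1) : ℝ) * p ^ (d' - 1) * (1 - p) ^ (n - 1 - d') * a d' :=
  stmt_14_general n hn p hp1 lam hlam0 hlam1 a ha
end

section
/- Let m ≥ 2 be a natural number, let n_1, …, n_m be natural numbers with n_k ≥ 2 for all k, let λ, ε, p_1, …, p_m be real numbers, and suppose γ : {1,…,m}² → ℝ satisfies: for all k ≠ l, γ_{kl} = 1 + λ·γ_{lk}·((n_k−1)·ε + 1) + λ·γ_{ll}·(n_l−1)·p_l + λ·∑_{s≠k,l} γ_{ls}·n_s·ε; and for all k, γ_{kk} = 1 + λ·γ_{kk}·((n_k−2)·p_k + 1) + λ·∑_{s≠k} γ_{ks}·n_s·ε. For a degree vector d = (d_1,…,d_m) ∈ ℕ^m define a_k(d) = 1 + λ·∑_{l=1}^m γ_{kl}·d_l. Then for every k ∈ {1,…,m} and every d, a_k(d) = 1 + λ·∑_{l=1}^m d_l·T_{kl}, where: for l ≠ k, T_{kl} = ∑ over degree vectors d' with d'_l ∈ {0,…,n_l−1}, d'_k ∈ {1,…,n_k},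 and d'_q ∈ {0,…,n_q} for q ≠ k,l, of C(n_l−1, d'_l)·p_l^(d'_l)·(1−p_l)^(n_l−1−d'_l) · C(n_k−1, d'_k−1)·ε^(d'_k−1)·(1−ε)^(n_k−d'_k) · ∏_{q≠k,l} C(n_q, d'_q)·ε^(d'_q)·(1−ε)^(n_q−d'_q) · a_l(d'); and T_{kk} = ∑ over degree vectors d' with d'_k ∈ {1,…,n_k−1} and d'_q ∈ {0,…,n_q} for q ≠ k, of C(n_k−2, d'_k−1)·p_k^(d'_k−1)·(1−p_k)^(n_k−1−d'_k) · ∏_{q≠k} C(n_q, d'_q)·ε^(d'_q)·(1−ε)^(n_q−d'_q) · a_k(d'). (This verifies the Bayesian–Nash equilibrium of the linear-quadratic game under stochastic block network generation: an agent in group k with degree vector d plays a_k(d) = 1 + λ∑_l γ_{kl} d_l.) -/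
open Finset

/-- Interim belief weight that an agent in group `k`, conditioning on a link to a
neighbor in group `l ≠ k`, assigns to that neighbor having degree vector `d'` under
the stochastic block model. -/
def sbWeightOff (m : ℕ) (n : Fin m → ℕ) (p : Fin m → ℝ) (ε : ℝ)
    (k l : Fin m) (d' : Fin m → ℕ) : ℝ :=
  ((n l - 1).choose (d' l) : ℝ) * p l ^ (d' l) * (1 - p l) ^ (n l - 1 - d' l) *
    (((n k - 1).choose (d' k - 1) : ℝ) * ε ^ (d' k - 1) * (1 - ε) ^ (n k - d' k)) *
    ∏ q ∈ Finset.univ \ {k, l},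
      ((n q).choose (d' q) : ℝ) * ε ^ (d' q) * (1 - ε) ^ (n q - d' q)

/-- Interim belief weight that an agent in group `k`, conditioning on a link to a
neighbor in its own group, assigns to that neighbor having degree vector `d'`. -/
def sbWeightDiag (m : ℕ) (n : Fin m → ℕ) (p : Fin m → ℝ) (ε : ℝ)
    (k : Fin m) (d' : Fin m → ℕ) : ℝ :=
  ((n k - 2).choose (d' k - 1) : ℝ) * p k ^ (d' k - 1) * (1 - p k) ^ (n k - 1 - d' k) *
    ∏ q ∈ Finset.univ \ {k},
      ((n q).choose (d' q) : ℝ) * ε ^ (d' q) * (1 - ε) ^ (n q - d' q)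

/-- Domain of degree vectors of a neighbor in group `l ≠ k` of an agent in group `k`:
`d'_l ∈ {0,…,n_l-1}`, `d'_k ∈ {1,…,n_k}`, `d'_q ∈ {0,…,n_q}` for `q ≠ k, l`. -/
def sbDomOff (m : ℕ) (n : Fin m → ℕ) (k l : Fin m) : Finset (Fin m → ℕ) :=
  Fintype.piFinset fun q =>
    if q = k then Finset.Icc 1 (n k)
    else if q = l then Finset.range (n l)
    else Finset.range (n q + 1)

/-- Domain of degree vectors of a neighbor in the own group `k` of an agent in
group `k`: `d'_k ∈ {1,…,n_k-1}`, `d'_q ∈ {0,…,n_q}` for `q ≠ k`. -/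
def sbDomDiag (m : ℕ) (n : Fin m → ℕ) (k : Fin m) : Finset (Fin m → ℕ) :=
  Fintype.piFinset fun q =>
    if q = k then Finset.Icc 1 (n k - 1)
    else Finset.range (n q + 1)

/-!
Under the product-of-binomials belief the coordinates of a neighbour's degree vector are
independent, each a binomial variable, shifted by one in the agent's own group because the
link to the agent is known. The interim expectation of the affine action
`1 + λ ∑ₛ γₗₛ d'ₛ` is therefore `1 + λ ∑ₛ γₗₛ 𝔼[d'ₛ]`, and with the binomial means inserted
this is the right-hand side of the fixed-point equation for `γₖₗ`.
-/

def binomWeight (N : ℕ) (q : ℝ) (j : ℕ) : ℝ :=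
  N.choose j * q ^ j * (1 - q) ^ (N - j)

theorem sum_binomWeight (N : ℕ) (q : ℝ) : ∑ j ∈ range (N + 1), binomWeight N q j = 1 := by
  have h := (add_pow q (1 - q) N).symm
  rw [add_sub_cancel, one_pow] at h
  exact (sum_congr rfl fun j _ => by rw [binomWeight]; ring).trans h

theorem sum_mul_binomWeight (N : ℕ) (q : ℝ) :
    ∑ j ∈ range (N + 1), (j : ℝ) * binomWeight N q j = N * q := by
  cases N with
  | zero => simp
  | succ M =>
    have absorb : ∀ i ∈ range (M + 1),
        ((i + 1 : ℕ) : ℝ) * binomWeight (M + 1) q (i + 1)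
          = (M + 1 : ℕ) * q * binomWeight M q i := by
      intro i _
      have hc : ((M + 1 : ℕ) : ℝ) * M.choose i = (M + 1).choose (i + 1) * (i + 1 : ℕ) := by
        exact_mod_cast Nat.add_one_mul_choose_eq M i
      simp only [binomWeight, Nat.add_sub_add_right, pow_succ]
      linear_combination (q ^ i * q * (1 - q) ^ (M - i)) * hc.symm
    rw [sum_range_succ', sum_congr rfl absorb, ← mul_sum, sum_binomWeight]
    simp

theorem sum_range_binomWeight_sub_one {N : ℕ} (hN : 1 ≤ N) (q : ℝ) :
    ∑ j ∈ range N, binomWeight (N - 1) q j = 1 := by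
  obtain ⟨M, rfl⟩ := Nat.exists_eq_add_of_le' hN
  simpa using sum_binomWeight M q

theorem sum_range_mul_binomWeight_sub_one {N : ℕ} (hN : 1 ≤ N) (q : ℝ) :
    ∑ j ∈ range N, (j : ℝ) * binomWeight (N - 1) q j = ((N : ℝ) - 1) * q := by
  obtain ⟨M, rfl⟩ := Nat.exists_eq_add_of_le' hN
  simpa using sum_mul_binomWeight M q

theorem sum_Icc_eq_sum_range_succ {β : Type*} [AddCommMonoid β] (f : ℕ → β) (N : ℕ) :
    ∑ j ∈ Icc 1 N, f j = ∑ j ∈ range N, f (j + 1) := by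
  rw [range_eq_Ico, sum_Ico_add', ← Ico_add_one_right_eq_Icc]

theorem sum_Icc_binomWeight_pred {N : ℕ} (hN : 1 ≤ N) (q : ℝ) :
    ∑ j ∈ Icc 1 N, binomWeight (N - 1) q (j - 1) = 1 := by
  obtain ⟨M, rfl⟩ := Nat.exists_eq_add_of_le' hN
  simpa [sum_Icc_eq_sum_range_succ] using sum_binomWeight M q

theorem sum_Icc_mul_binomWeight_pred {N : ℕ} (hN : 1 ≤ N) (q : ℝ) :
    ∑ j ∈ Icc 1 N, (j : ℝ) * binomWeight (N - 1) q (j - 1) = 1 + ((N : ℝ) - 1) * q := by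
  obtain ⟨M, rfl⟩ := Nat.exists_eq_add_of_le' hN
  simp only [sum_Icc_eq_sum_range_succ, Nat.add_sub_cancel, Nat.cast_add, Nat.cast_one, add_mul,
    sum_add_distrib, one_mul, sum_binomWeight, sum_mul_binomWeight]
  ring

section ProductMeasure

variable {ι : Type*} [Fintype ι] [DecidableEq ι] (t : ι → Finset ℕ) (W : ι → ℕ → ℝ)

theorem sum_piFinset_prod (hW : ∀ i, ∑ j ∈ t i, W i j = 1) :
    ∑ x ∈ Fintype.piFinset t, ∏ i, W i (x i) = 1 := by
  simp [← prod_univ_sum, hW]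

theorem sum_piFinset_coord_mul_prod (hW : ∀ i, ∑ j ∈ t i, W i j = 1) (i : ι) :
    ∑ x ∈ Fintype.piFinset t, (x i : ℝ) * ∏ q, W q (x q) = ∑ j ∈ t i, (j : ℝ) * W i j := by
  set V := Function.update W i fun j => (j : ℝ) * W i j
  have hV : ∀ x : ι → ℕ, (x i : ℝ) * ∏ q, W q (x q) = ∏ q, V q (x q) := by
    intro x
    rw [Fintype.prod_eq_mul_prod_compl i, Fintype.prod_eq_mul_prod_compl i, ← mul_assoc]
    congr 1
    · simp [V]
    · exact prod_congr rfl fun q hq => by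
        simp [V, Function.update_of_ne (mem_compl.1 hq ∘ mem_singleton.2)]
  rw [sum_congr rfl fun x _ => hV x, ← prod_univ_sum, Fintype.prod_eq_mul_prod_compl i,
    prod_eq_one fun q hq => by
      simp [V, Function.update_of_ne (mem_compl.1 hq ∘ mem_singleton.2), hW]]
  simp [V]

theorem sum_piFinset_prod_mul_affine (hW : ∀ i, ∑ j ∈ t i, W i j = 1) (lam : ℝ) (c : ι → ℝ) :
    ∑ x ∈ Fintype.piFinset t, (∏ i, W i (x i)) * (1 + lam * ∑ i, c i * x i)
      = 1 + lam * ∑ i, c i * ∑ j ∈ t i, (j : ℝ) * W i j := by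
  calc ∑ x ∈ Fintype.piFinset t, (∏ i, W i (x i)) * (1 + lam * ∑ i, c i * x i)
      = ∑ x ∈ Fintype.piFinset t, ∏ i, W i (x i)
          + lam * ∑ i, c i * ∑ x ∈ Fintype.piFinset t, (x i : ℝ) * ∏ q, W q (x q) := by
        simp only [mul_add, mul_one, sum_add_distrib, mul_sum]
        rw [sum_comm (s := univ)]
        exact congrArg _ (sum_congr rfl fun _ _ => sum_congr rfl fun _ _ => by ring)
    _ = _ := by simp only [sum_piFinset_prod t W hW, sum_piFinset_coord_mul_prod t W hW]

end ProductMeasure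

section StochasticBlock

variable {m : ℕ} (n : Fin m → ℕ) (p : Fin m → ℝ) (ε : ℝ)

def sbMarginalOff (k l q : Fin m) (j : ℕ) : ℝ :=
  if q = k then binomWeight (n k - 1) ε (j - 1)
  else if q = l then binomWeight (n l - 1) (p l) j
  else binomWeight (n q) ε j

def sbMarginalDiag (k q : Fin m) (j : ℕ) : ℝ :=
  if q = k then binomWeight (n k - 1 - 1) (p k) (j - 1) else binomWeight (n q) ε j

variable {n p ε}

theorem sbWeightOff_eq_prod {k l : Fin m} (hkl : k ≠ l) {d' : Fin m → ℕ} (hd' : 1 ≤ d' k) :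
    sbWeightOff m n p ε k l d' = ∏ q, sbMarginalOff n p ε k l q (d' q) := by
  rw [← prod_sdiff (subset_univ {k, l}), prod_pair hkl, sbWeightOff]
  have hrest : ∀ q ∈ univ \ {k, l},
      sbMarginalOff n p ε k l q (d' q) = binomWeight (n q) ε (d' q) := by
    intro q hq
    simp only [mem_sdiff, mem_insert, mem_singleton, not_or] at hq
    simp [sbMarginalOff, hq.2.1, hq.2.2]
  rw [prod_congr rfl hrest]
  simp only [sbMarginalOff, ↓reduceIte, if_neg hkl.symm, binomWeight,
    show n k - 1 - (d' k - 1) = n k - d' k by omega]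
  ring

theorem sbWeightDiag_eq_prod (k : Fin m) {d' : Fin m → ℕ} (hd' : 1 ≤ d' k) :
    sbWeightDiag m n p ε k d' = ∏ q, sbMarginalDiag n p ε k q (d' q) := by
  rw [Fintype.prod_eq_mul_prod_compl k, compl_eq_univ_sdiff, sbWeightDiag]
  have hrest : ∀ q ∈ univ \ {k},
      sbMarginalDiag n p ε k q (d' q) = binomWeight (n q) ε (d' q) := by
    intro q hq
    simp [sbMarginalDiag, show q ≠ k by simpa using hq]
  rw [prod_congr rfl hrest]
  simp only [sbMarginalDiag, ↓reduceIte, binomWeight,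
    show n k - 1 - 1 = n k - 2 by omega, show n k - 2 - (d' k - 1) = n k - 1 - d' k by omega]

theorem sum_sbWeightOff_mul_affine {k l : Fin m} (hkl : k ≠ l) (hk : 1 ≤ n k) (hl : 1 ≤ n l)
    (lam : ℝ) (c : Fin m → ℝ) :
    ∑ d' ∈ sbDomOff m n k l, sbWeightOff m n p ε k l d' * (1 + lam * ∑ s, c s * (d' s : ℝ))
      = 1 + lam * c k * (((n k : ℝ) - 1) * ε + 1) + lam * c l * ((n l : ℝ) - 1) * p l
        + lam * ∑ s ∈ univ \ {k, l}, c s * (n s : ℝ) * ε := by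
  set t : Fin m → Finset ℕ := fun q =>
    if q = k then Icc 1 (n k) else if q = l then range (n l) else range (n q + 1)
  have hmass : ∀ q, ∑ j ∈ t q, sbMarginalOff n p ε k l q j = 1 := by
    intro q
    simp only [t, sbMarginalOff]
    split_ifs with hqk hql
    · subst hqk; exact sum_Icc_binomWeight_pred hk ε
    · subst hql; exact sum_range_binomWeight_sub_one hl _
    · exact sum_binomWeight _ _
  have hmean : ∀ q, ∑ j ∈ t q, (j : ℝ) * sbMarginalOff n p ε k l q j
      = if q = k then 1 + ((n k : ℝ) - 1) * ε
        else if q = l then ((n l : ℝ) - 1) * p l else (n q : ℝ) * ε := by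
    intro q
    simp only [t, sbMarginalOff]
    split_ifs with hqk hql
    · subst hqk; exact sum_Icc_mul_binomWeight_pred hk ε
    · subst hql; exact sum_range_mul_binomWeight_sub_one hl _
    · exact sum_mul_binomWeight _ _
  have hweight : ∀ d' ∈ sbDomOff m n k l,
      sbWeightOff m n p ε k l d' = ∏ q, sbMarginalOff n p ε k l q (d' q) := fun d' hd' =>
    sbWeightOff_eq_prod hkl (mem_Icc.1 (by simpa [t] using Fintype.mem_piFinset.1 hd' k :
      d' k ∈ Icc 1 (n k))).1
  rw [sum_congr rfl fun d' hd' => congrArg (· * _) (hweight d' hd'),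
    show sbDomOff m n k l = Fintype.piFinset t from rfl, sum_piFinset_prod_mul_affine t _ hmass,
    ← sum_sdiff (subset_univ {k, l}), sum_pair hkl]
  have hrest : ∀ s ∈ univ \ {k, l},
      c s * ∑ j ∈ t s, (j : ℝ) * sbMarginalOff n p ε k l s j = c s * (n s : ℝ) * ε := by
    intro s hs
    simp only [mem_sdiff, mem_insert, mem_singleton, not_or] at hs
    rw [hmean, if_neg hs.2.1, if_neg hs.2.2, mul_assoc]
  rw [sum_congr rfl hrest, hmean, hmean, if_pos rfl, if_neg hkl.symm, if_pos rfl]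
  ring

theorem sum_sbWeightDiag_mul_affine {k : Fin m} (hk : 2 ≤ n k) (lam : ℝ) (c : Fin m → ℝ) :
    ∑ d' ∈ sbDomDiag m n k, sbWeightDiag m n p ε k d' * (1 + lam * ∑ s, c s * (d' s : ℝ))
      = 1 + lam * c k * (((n k : ℝ) - 2) * p k + 1)
        + lam * ∑ s ∈ univ \ {k}, c s * (n s : ℝ) * ε := by
  set t : Fin m → Finset ℕ := fun q => if q = k then Icc 1 (n k - 1) else range (n q + 1)
  have hmass : ∀ q, ∑ j ∈ t q, sbMarginalDiag n p ε k q j = 1 := by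
    intro q
    simp only [t, sbMarginalDiag]
    split_ifs with hqk
    · exact sum_Icc_binomWeight_pred (by omega) _
    · exact sum_binomWeight _ _
  have hmean : ∀ q, ∑ j ∈ t q, (j : ℝ) * sbMarginalDiag n p ε k q j
      = if q = k then 1 + ((n k : ℝ) - 2) * p k else (n q : ℝ) * ε := by
    intro q
    simp only [t, sbMarginalDiag]
    split_ifs with hqk
    · rw [sum_Icc_mul_binomWeight_pred (by omega), Nat.cast_sub (by omega)]
      ring
    · exact sum_mul_binomWeight _ _
  have hweight : ∀ d' ∈ sbDomDiag m n k,
      sbWeightDiag m n p ε k d' = ∏ q, sbMarginalDiag n p ε k q (d' q) := fun d' hd' =>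
    sbWeightDiag_eq_prod k (mem_Icc.1 (by simpa [t] using Fintype.mem_piFinset.1 hd' k :
      d' k ∈ Icc 1 (n k - 1))).1
  rw [sum_congr rfl fun d' hd' => congrArg (· * _) (hweight d' hd'),
    show sbDomDiag m n k = Fintype.piFinset t from rfl, sum_piFinset_prod_mul_affine t _ hmass,
    ← add_sum_erase _ _ (mem_univ k), sdiff_singleton_eq_erase]
  have hrest : ∀ s ∈ univ.erase k,
      c s * ∑ j ∈ t s, (j : ℝ) * sbMarginalDiag n p ε k s j = c s * (n s : ℝ) * ε := by
    intro s hs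
    rw [hmean, if_neg (ne_of_mem_erase hs), mul_assoc]
  rw [sum_congr rfl hrest, hmean, if_pos rfl]
  ring

end StochasticBlock

theorem stmt_16_general (m : ℕ) (n : Fin m → ℕ) (hn : ∀ k, 2 ≤ n k)
    (lam ε : ℝ) (p : Fin m → ℝ) (γ : Fin m → Fin m → ℝ)
    (hoff : ∀ k l : Fin m, k ≠ l →
      γ k l = 1 + lam * γ l k * (((n k : ℝ) - 1) * ε + 1)
        + lam * γ l l * ((n l : ℝ) - 1) * p l
        + lam * ∑ s ∈ Finset.univ \ {k, l}, γ l s * (n s : ℝ) * ε)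
    (hdiag : ∀ k : Fin m,
      γ k k = 1 + lam * γ k k * (((n k : ℝ) - 2) * p k + 1)
        + lam * ∑ s ∈ Finset.univ \ {k}, γ k s * (n s : ℝ) * ε)
    (a : Fin m → (Fin m → ℕ) → ℝ)
    (ha : ∀ (k : Fin m) (d : Fin m → ℕ), a k d = 1 + lam * ∑ l, γ k l * (d l : ℝ)) :
    ∀ (k : Fin m) (d : Fin m → ℕ),
      a k d = 1 + lam * ∑ l, (d l : ℝ) *
        (if l = k then
          ∑ d' ∈ sbDomDiag m n k, sbWeightDiag m n p ε k d' * a k d'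
        else
          ∑ d' ∈ sbDomOff m n k l, sbWeightOff m n p ε k l d' * a l d') := by
  intro k d
  simp only [ha]
  refine congrArg (1 + lam * ·) (sum_congr rfl fun l _ => ?_)
  split_ifs with hlk
  · subst hlk
    rw [sum_sbWeightDiag_mul_affine (hn l), ← hdiag, mul_comm]
  · have hkl : k ≠ l := Ne.symm hlk
    rw [sum_sbWeightOff_mul_affine hkl (one_le_two.trans (hn k)) (one_le_two.trans (hn l)),
      ← hoff k l hkl, mul_comm]

/-- Proposition 3: If `γ` solves the stochastic-block complementarity
system, then the profile `a_k(d) = 1 + λ ∑_l γ_{kl} d_l` satisfies the interim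
best-response system `a_k(d) = 1 + λ ∑_l d_l · T_{kl}` where `T_{kl}` is the interim
expectation of the neighbor's action under the product-of-binomials beliefs. -/
theorem stmt_16 (m : ℕ) (hm : 2 ≤ m) (n : Fin m → ℕ) (hn : ∀ k, 2 ≤ n k)
    (lam ε : ℝ) (p : Fin m → ℝ) (γ : Fin m → Fin m → ℝ)
    (hoff : ∀ k l : Fin m, k ≠ l →
      γ k l = 1 + lam * γ l k * (((n k : ℝ) - 1) * ε + 1)
        + lam * γ l l * ((n l : ℝ) - 1) * p l
        + lam * ∑ s ∈ Finset.univ \ {k, l}, γ l s * (n s : ℝ) * ε)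
    (hdiag : ∀ k : Fin m,
      γ k k = 1 + lam * γ k k * (((n k : ℝ) - 2) * p k + 1)
        + lam * ∑ s ∈ Finset.univ \ {k}, γ k s * (n s : ℝ) * ε)
    (a : Fin m → (Fin m → ℕ) → ℝ)
    (ha : ∀ (k : Fin m) (d : Fin m → ℕ), a k d = 1 + lam * ∑ l, γ k l * (d l : ℝ)) :
    ∀ (k : Fin m) (d : Fin m → ℕ),
      a k d = 1 + lam * ∑ l, (d l : ℝ) *
        (if l = k then
          ∑ d' ∈ sbDomDiag m n k, sbWeightDiag m n p ε k d' * a k d'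
        else
          ∑ d' ∈ sbDomOff m n k l, sbWeightOff m n p ε k l d' * a l d') :=
  stmt_16_general m n hn lam ε p γ hoff hdiag a ha
end

section
/- Let ν ≥ 3 be a natural number, let ε, p be real numbers with 0 ≤ ε < p ≤ 1, and let λ be a real number with 0 < λ < 1/(2ν−1). Then the linear system γ_{11} = 1 + λ·γ_{11}·((ν−2)·p + 1) + λ·γ_{12}·ν·ε; γ_{12} = 1 + λ·γ_{21}·((ν−1)·ε + 1) + λ·γ_{22}·(ν−1)·p; γ_{21} = 1 + λ·γ_{11}·(ν−1)·p + λ·γ_{12}·((ν−1)·ε + 1); γ_{22} = 1 + λ·γ_{21}·ν·ε + λ·γ_{22}·((ν−2)·p + 1) has a unique real solution (γ_{11}, γ_{12}, γ_{21}, γ_{22}), and this solution satisfies γ_{11} = γ_{22}, γ_{12} = γ_{21}, and γ_{11}·(1 − λ·(1−p)) = γ_{12}·(1 − λ·(1−ε)). -/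
/-!
Write the system as `γ₁₁ = 1 + a γ₁₁ + b γ₁₂`, `γ₁₂ = 1 + c γ₂₁ + d γ₂₂`,
`γ₂₁ = 1 + d γ₁₁ + c γ₁₂`, `γ₂₂ = 1 + b γ₂₁ + a γ₂₂`. It is invariant under exchanging the two
groups, so it splits into the antisymmetric part `(γ₁₁ - γ₂₂, γ₁₂ - γ₂₁)`, a homogeneous 2 × 2
system of determinant `(1 - a)(1 + c) + b d`, and the symmetric part, a 2 × 2 system of
determinant `(1 - a)(1 - c) - b d`. For the block model the coefficients are nonnegative and both
row sums `a + b` and `c + d` are at most `λ (2ν - 1) < 1`, so both determinants are positive: the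
antisymmetric part vanishes and the symmetric part has a unique solution. Subtracting the
equations for `γ₁₁` and `γ₂₁` of a symmetric solution gives the ratio identity.
-/

namespace BlockSystem

def IsSolution (a b c d u v w z : ℝ) : Prop :=
  u = 1 + a * u + b * v ∧ v = 1 + c * w + d * z ∧
    w = 1 + d * u + c * v ∧ z = 1 + b * w + a * z

variable {a b c d u v w z : ℝ}

theorem det_pos (hb : 0 ≤ b) (hd : 0 ≤ d) (hab : a + b < 1) (hcd : c + d < 1) :
    0 < (1 - a) * (1 - c) - b * d :=
  sub_pos.mpr (mul_lt_mul'' (by linarith) (by linarith) hb hd)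

theorem antisymmDet_pos (hb : 0 ≤ b) (hc : 0 ≤ c) (hd : 0 ≤ d) (hab : a + b < 1) :
    0 < (1 - a) * (1 + c) + b * d :=
  add_pos_of_pos_of_nonneg (mul_pos (by linarith) (by linarith)) (mul_nonneg hb hd)

theorem IsSolution.symmetric (h : IsSolution a b c d u v w z)
    (hK : (1 - a) * (1 + c) + b * d ≠ 0) : u = z ∧ v = w := by
  obtain ⟨h1, h2, h3, h4⟩ := h
  have huz : ((1 - a) * (1 + c) + b * d) * (u - z) = 0 := by
    linear_combination (1 + c) * (h1 - h4) + b * (h2 - h3)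
  have hvw : ((1 - a) * (1 + c) + b * d) * (v - w) = 0 := by
    linear_combination (1 - a) * (h2 - h3) - d * (h1 - h4)
  exact ⟨sub_eq_zero.mp ((mul_eq_zero.mp huz).resolve_left hK),
    sub_eq_zero.mp ((mul_eq_zero.mp hvw).resolve_left hK)⟩

theorem IsSolution.mul_eq_mul (h : IsSolution a b c d u v w z) (hvw : v = w) :
    u * (1 - a + d) = v * (1 - c + b) := by
  obtain ⟨h1, -, h3, -⟩ := h
  linear_combination h1 - h3 - hvw

theorem isSolution_iff (hΔ : (1 - a) * (1 - c) - b * d ≠ 0)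
    (hK : (1 - a) * (1 + c) + b * d ≠ 0) :
    IsSolution a b c d u v w z ↔
      u = (1 - c + b) / ((1 - a) * (1 - c) - b * d) ∧
      v = (1 - a + d) / ((1 - a) * (1 - c) - b * d) ∧
      w = (1 - a + d) / ((1 - a) * (1 - c) - b * d) ∧
      z = (1 - c + b) / ((1 - a) * (1 - c) - b * d) := by
  constructor
  · intro h
    obtain ⟨rfl, rfl⟩ := h.symmetric hK
    obtain ⟨h1, -, h3, -⟩ := h
    have hu : u = (1 - c + b) / ((1 - a) * (1 - c) - b * d) :=
      (eq_div_iff hΔ).mpr (by linear_combination (1 - c) * h1 + b * h3)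
    have hv : v = (1 - a + d) / ((1 - a) * (1 - c) - b * d) :=
      (eq_div_iff hΔ).mpr (by linear_combination d * h1 + (1 - a) * h3)
    exact ⟨hu, hv, hv, hu⟩
  · rintro ⟨rfl, rfl, rfl, rfl⟩
    have hX := div_mul_cancel₀ (1 - c + b) hΔ
    have hY := div_mul_cancel₀ (1 - a + d) hΔ
    refine ⟨?_, ?_, ?_, ?_⟩ <;> apply mul_right_cancel₀ hΔ
    · linear_combination (1 - a) * hX - b * hY
    · linear_combination (1 - c) * hY - d * hX
    · linear_combination (1 - c) * hY - d * hX
    · linear_combination (1 - a) * hX - b * hY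

theorem existsUnique_isSolution (hΔ : (1 - a) * (1 - c) - b * d ≠ 0)
    (hK : (1 - a) * (1 + c) + b * d ≠ 0) :
    ∃! g : ℝ × ℝ × ℝ × ℝ, IsSolution a b c d g.1 g.2.1 g.2.2.1 g.2.2.2 := by
  set X := (1 - c + b) / ((1 - a) * (1 - c) - b * d)
  set Y := (1 - a + d) / ((1 - a) * (1 - c) - b * d)
  refine ⟨(X, Y, Y, X), (isSolution_iff hΔ hK).mpr ⟨rfl, rfl, rfl, rfl⟩, fun g hg => ?_⟩
  obtain ⟨h1, h2, h3, h4⟩ := (isSolution_iff hΔ hK).mp hg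
  exact Prod.ext h1 (Prod.ext h2 (Prod.ext h3 h4))

end BlockSystem

open BlockSystem

theorem twoGroupSystem_iff (ν : ℕ) (ε p lam γ11 γ12 γ21 γ22 : ℝ) :
    (γ11 = 1 + lam * γ11 * (((ν : ℝ) - 2) * p + 1) + lam * γ12 * (ν : ℝ) * ε ∧
      γ12 = 1 + lam * γ21 * (((ν : ℝ) - 1) * ε + 1) + lam * γ22 * ((ν : ℝ) - 1) * p ∧
      γ21 = 1 + lam * γ11 * ((ν : ℝ) - 1) * p + lam * γ12 * (((ν : ℝ) - 1) * ε + 1) ∧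
      γ22 = 1 + lam * γ21 * (ν : ℝ) * ε + lam * γ22 * (((ν : ℝ) - 2) * p + 1)) ↔
    IsSolution (lam * ((ν - 2) * p + 1)) (lam * ν * ε) (lam * ((ν - 1) * ε + 1))
      (lam * (ν - 1) * p) γ11 γ12 γ21 γ22 := by
  constructor <;> rintro ⟨h1, h2, h3, h4⟩ <;>
    exact ⟨by linear_combination h1, by linear_combination h2, by linear_combination h3,
      by linear_combination h4⟩

theorem twoGroupSystem_coeff_bounds {ν : ℕ} {ε p lam : ℝ} (hν : 3 ≤ ν) (hε0 : 0 ≤ ε)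
    (hεp : ε < p) (hp1 : p ≤ 1) (hlam0 : 0 < lam) (hlam1 : lam < 1 / (2 * (ν : ℝ) - 1)) :
    0 ≤ lam * ν * ε ∧ 0 ≤ lam * ((ν - 1) * ε + 1) ∧ 0 ≤ lam * (ν - 1) * p ∧
      lam * ((ν - 2) * p + 1) + lam * ν * ε < 1 ∧
      lam * ((ν - 1) * ε + 1) + lam * (ν - 1) * p < 1 := by
  have hν' : (3 : ℝ) ≤ ν := by exact_mod_cast hν
  have hlam : lam * (2 * ν - 1) < 1 := by
    simpa using (lt_div_iff₀ (by linarith)).mp hlam1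
  have hsum₁ : (ν - 2) * p + 1 + ν * ε ≤ 2 * ν - 1 := by
    nlinarith [mul_nonneg (by linarith : (0 : ℝ) ≤ ν - 2) (by linarith : 0 ≤ 1 - p),
      mul_nonneg (by linarith : (0 : ℝ) ≤ ν) (by linarith : 0 ≤ 1 - ε)]
  have hsum₂ : (ν - 1) * ε + 1 + (ν - 1) * p ≤ 2 * ν - 1 := by
    nlinarith [mul_nonneg (by linarith : (0 : ℝ) ≤ ν - 1) (by linarith : 0 ≤ 2 - ε - p)]
  refine ⟨by positivity, mul_nonneg hlam0.le (by nlinarith),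
    mul_nonneg (mul_nonneg hlam0.le (by linarith)) (by linarith), ?_, ?_⟩
  · linarith [mul_le_mul_of_nonneg_left hsum₁ hlam0.le]
  · linarith [mul_le_mul_of_nonneg_left hsum₂ hlam0.le]

/-- For the symmetric two-group stochastic block system (equal group
sizes `ν ≥ 3`, intra-group probability `p`, inter-group probability `ε`, with
`0 ≤ ε < p ≤ 1` and `0 < λ < 1/(2ν - 1)`), the linear system has a unique real
solution, and this solution satisfies `γ₁₁ = γ₂₂`, `γ₁₂ = γ₂₁`, and
`γ₁₁·(1 - λ(1-p)) = γ₁₂·(1 - λ(1-ε))`. -/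
theorem stmt_17 (ν : ℕ) (hν : 3 ≤ ν)
    (ε p lam : ℝ) (hε0 : 0 ≤ ε) (hεp : ε < p) (hp1 : p ≤ 1)
    (hlam0 : 0 < lam) (hlam1 : lam < 1 / (2 * (ν : ℝ) - 1)) :
    (∃! g : ℝ × ℝ × ℝ × ℝ,
      g.1 = 1 + lam * g.1 * (((ν : ℝ) - 2) * p + 1) + lam * g.2.1 * (ν : ℝ) * ε ∧
      g.2.1 = 1 + lam * g.2.2.1 * (((ν : ℝ) - 1) * ε + 1) +
        lam * g.2.2.2 * ((ν : ℝ) - 1) * p ∧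
      g.2.2.1 = 1 + lam * g.1 * ((ν : ℝ) - 1) * p +
        lam * g.2.1 * (((ν : ℝ) - 1) * ε + 1) ∧
      g.2.2.2 = 1 + lam * g.2.2.1 * (ν : ℝ) * ε +
        lam * g.2.2.2 * (((ν : ℝ) - 2) * p + 1)) ∧
    (∀ γ11 γ12 γ21 γ22 : ℝ,
      γ11 = 1 + lam * γ11 * (((ν : ℝ) - 2) * p + 1) + lam * γ12 * (ν : ℝ) * ε →
      γ12 = 1 + lam * γ21 * (((ν : ℝ) - 1) * ε + 1) + lam * γ22 * ((ν : ℝ) - 1) * p →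
      γ21 = 1 + lam * γ11 * ((ν : ℝ) - 1) * p + lam * γ12 * (((ν : ℝ) - 1) * ε + 1) →
      γ22 = 1 + lam * γ21 * (ν : ℝ) * ε + lam * γ22 * (((ν : ℝ) - 2) * p + 1) →
      γ11 = γ22 ∧ γ12 = γ21 ∧
        γ11 * (1 - lam * (1 - p)) = γ12 * (1 - lam * (1 - ε))) := by
  obtain ⟨hb, hc, hd, hab, hcd⟩ := twoGroupSystem_coeff_bounds hν hε0 hεp hp1 hlam0 hlam1
  have hΔ := (det_pos hb hd hab hcd).ne'
  have hK := (antisymmDet_pos hb hc hd hab).ne'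
  refine ⟨(existsUnique_congr fun g => twoGroupSystem_iff ν ε p lam _ _ _ _).mpr
    (existsUnique_isSolution hΔ hK), fun γ11 γ12 γ21 γ22 h1 h2 h3 h4 => ?_⟩
  have h := (twoGroupSystem_iff ν ε p lam γ11 γ12 γ21 γ22).mp ⟨h1, h2, h3, h4⟩
  obtain ⟨huz, hvw⟩ := h.symmetric hK
  exact ⟨huz, hvw, by linear_combination h.mul_eq_mul hvw⟩
end

section
/- Let n_1, n_2 ≥ 3 be natural numbers, let ε, p be real numbers with 0 ≤ ε < p ≤ 1, and let λ be a real number with 0 < λ < 1/(n_1 + n_2 − 1). Let (γ_{11}, γ_{12}, γ_{21}, γ_{22}) be the unique real solution of the system γ_{11} = 1 + λ·γ_{11}·((n_1−2)·p + 1) + λ·γ_{12}·n_2·ε; γ_{12} = 1 + λ·γ_{21}·((n_1−1)·ε + 1) + λ·γ_{22}·(n_2−1)·p; γ_{21} = 1 + λ·γ_{11}·(n_1−1)·p + λ·γ_{12}·((n_2−1)·ε + 1); γ_{22} = 1 + λ·γ_{21}·n_1·ε + λ·γ_{22}·((n_2−2)·p + 1). Then: (i) if n_1 ≥ n_2 +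 2 then γ_{11} > γ_{12} and γ_{22} < γ_{21}; (ii) if n_2 ≥ n_1 + 2 then γ_{11} < γ_{12} and γ_{22} > γ_{21}; (iii) if n_1 = n_2 then γ_{11} < γ_{12} and γ_{22} < γ_{21}. -/
/-!
Subtracting equations of the system and using the identity
`γ21 - γ12 = λ(p - ε)γ12 + (1 - λ(1 - p))(γ11 - γ12)` turns it into a 2 × 2 system for
`u = γ11 - γ12` and `v = γ21 - γ22`:
`A u - B v = λ(p - ε)γ12 (n₁ - n₂ - 1 - λr₁)` and `D v - C u = λ(p - ε)γ21 (n₁ - n₂ + 1 + λr₂)`,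
where `r₁, r₂ ≤ n₁ + n₂ - 1`, `B, C ≥ 0`, and `λ(n₁ + n₂ - 1) < 1` gives `A > B`, `D > C` and
`λrᵢ < 1`. The solution is positive, as is any fixed point of `γ = 1 + Mγ` with `M` nonnegative
and substochastic, so for `n₁ ≥ n₂ + 2` both right-hand sides are positive and Cramer's rule
gives `u, v > 0`. Exchanging the two groups is a symmetry of the system, which gives the case
`n₂ ≥ n₁ + 2`. For `n₁ = n₂` the differences `γ11 - γ22` and `γ12 - γ21` solve a homogeneous
system with nonzero determinant, so `γ12 = γ21`, and the identity above gives `γ11 < γ12`.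
-/

open Finset Matrix

theorem Matrix.one_le_of_eq_one_add_mulVec {ι : Type*} [Fintype ι] {M : Matrix ι ι ℝ}
    (hM : ∀ i j, 0 ≤ M i j) (hrow : ∀ i, ∑ j, M i j ≤ 1) {γ : ι → ℝ}
    (hγ : γ = 1 + M *ᵥ γ) (i : ι) : 1 ≤ γ i := by
  have hγ' (k : ι) : γ k = 1 + ∑ j, M k j * γ j := congrFun hγ k
  obtain ⟨i₀, -, hmin⟩ := exists_min_image univ γ ⟨i, mem_univ i⟩
  have hmin_nonneg : 0 ≤ γ i₀ := by
    by_contra! hneg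
    have hbound : (∑ j, M i₀ j) * γ i₀ ≤ ∑ j, M i₀ j * γ j := by
      rw [sum_mul]
      exact sum_le_sum fun j _ => mul_le_mul_of_nonneg_left (hmin j (mem_univ j)) (hM i₀ j)
    nlinarith [hγ' i₀, hrow i₀]
  have : 0 ≤ ∑ j, M i j * γ j :=
    sum_nonneg fun j _ => mul_nonneg (hM i j) (hmin_nonneg.trans (hmin j (mem_univ j)))
  linarith [hγ' i]

theorem pos_and_pos_of_det_pos {A B C D u v : ℝ} (hA : 0 < A) (hD : 0 < D) (hB : 0 ≤ B)
    (hC : 0 ≤ C) (hdet : B * C < A * D) (hu : 0 < A * u - B * v) (hv : 0 < D * v - C * u) :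
    0 < u ∧ 0 < v := by
  have hdet' : 0 < A * D - B * C := sub_pos.2 hdet
  constructor
  · have hcramer : (A * D - B * C) * u = D * (A * u - B * v) + B * (D * v - C * u) := by ring
    have : 0 < (A * D - B * C) * u := by rw [hcramer]; positivity
    exact pos_of_mul_pos_right this hdet'.le
  · have hcramer : (A * D - B * C) * v = A * (D * v - C * u) + C * (A * u - B * v) := by ring
    have : 0 < (A * D - B * C) * v := by rw [hcramer]; positivity
    exact pos_of_mul_pos_right this hdet'.le

structure IsBlockEquilibrium (n₁ n₂ ε p lam γ11 γ12 γ21 γ22 : ℝ) : Prop where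
  eq11 : γ11 = 1 + lam * γ11 * ((n₁ - 2) * p + 1) + lam * γ12 * n₂ * ε
  eq12 : γ12 = 1 + lam * γ21 * ((n₁ - 1) * ε + 1) + lam * γ22 * (n₂ - 1) * p
  eq21 : γ21 = 1 + lam * γ11 * (n₁ - 1) * p + lam * γ12 * ((n₂ - 1) * ε + 1)
  eq22 : γ22 = 1 + lam * γ21 * n₁ * ε + lam * γ22 * ((n₂ - 2) * p + 1)

namespace IsBlockEquilibrium

variable {n₁ n₂ ε p lam γ11 γ12 γ21 γ22 : ℝ}

theorem swap (h : IsBlockEquilibrium n₁ n₂ ε p lam γ11 γ12 γ21 γ22) :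
    IsBlockEquilibrium n₂ n₁ ε p lam γ22 γ21 γ12 γ11 :=
  ⟨by linear_combination h.eq22, by linear_combination h.eq21,
    by linear_combination h.eq12, by linear_combination h.eq11⟩

theorem one_le (h : IsBlockEquilibrium n₁ n₂ ε p lam γ11 γ12 γ21 γ22) (hn₁ : 2 ≤ n₁)
    (hn₂ : 2 ≤ n₂) (hε : ε ∈ Set.Icc (0 : ℝ) 1) (hp : p ∈ Set.Icc (0 : ℝ) 1) (hlam : 0 ≤ lam)
    (hlam₁ : lam * (n₁ + n₂ - 1) ≤ 1) :
    1 ≤ γ11 ∧ 1 ≤ γ12 ∧ 1 ≤ γ21 ∧ 1 ≤ γ22 := by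
  obtain ⟨hε₀, hε₁⟩ := hε
  obtain ⟨hp₀, hp₁⟩ := hp
  let M : Matrix (Fin 4) (Fin 4) ℝ := lam • !![(n₁ - 2) * p + 1, n₂ * ε, 0, 0;
    0, 0, (n₁ - 1) * ε + 1, (n₂ - 1) * p;
    (n₁ - 1) * p, (n₂ - 1) * ε + 1, 0, 0;
    0, 0, n₁ * ε, (n₂ - 2) * p + 1]
  have hM : ∀ i j, 0 ≤ M i j := by
    intro i j
    fin_cases i <;> fin_cases j <;>
      simp only [M, Fin.isValue, Fin.zero_eta, Fin.mk_one, Fin.reduceFinMk, Matrix.smul_apply,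
        of_apply, cons_val', cons_val_fin_one, cons_val_zero, cons_val_one, Matrix.cons_val,
        smul_eq_mul, mul_zero, le_refl] <;>
      exact mul_nonneg hlam (by nlinarith)
  have hrow : ∀ i, ∑ j, M i j ≤ 1 := by
    intro i
    fin_cases i <;>
      simp only [M, Fin.isValue, Fin.zero_eta, Fin.mk_one, Fin.reduceFinMk, Matrix.smul_apply,
        of_apply, cons_val', cons_val_fin_one, cons_val_zero, cons_val_one, Matrix.cons_val,
        smul_eq_mul, Fin.sum_univ_four, mul_zero, add_zero, zero_add, ← mul_add] <;>
      refine (mul_le_mul_of_nonneg_left ?_ hlam).trans hlam₁ <;> nlinarith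
  have hγ : ![γ11, γ12, γ21, γ22] = 1 + M *ᵥ ![γ11, γ12, γ21, γ22] := by
    ext i
    fin_cases i <;>
      simp only [M, Fin.isValue, Fin.zero_eta, Fin.mk_one, Fin.reduceFinMk, Matrix.cons_val,
        cons_val_zero, cons_val_one, smul_of, smul_cons, smul_eq_mul, mul_zero, Matrix.smul_empty,
        mulVec_cons, mulVec_empty, add_zero, zero_add, Pi.add_apply, Pi.one_apply, Pi.smul_apply,
        Function.comp_apply, head_cons, tail_cons]
    · linear_combination h.eq11
    · linear_combination h.eq12
    · linear_combination h.eq21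
    · linear_combination h.eq22
  have := Matrix.one_le_of_eq_one_add_mulVec hM hrow hγ
  exact ⟨this 0, this 1, this 2, this 3⟩

theorem cross_sub (h : IsBlockEquilibrium n₁ n₂ ε p lam γ11 γ12 γ21 γ22) :
    γ21 - γ12 = lam * (p - ε) * γ12 + (1 - lam * (1 - p)) * (γ11 - γ12) := by
  linear_combination h.eq21 - h.eq11

theorem sub_relation (h : IsBlockEquilibrium n₁ n₂ ε p lam γ11 γ12 γ21 γ22) :
    (1 - lam * ((n₁ - 2) * p + 1) +
        lam * (1 - lam * (1 - p)) * ((n₁ - 1) * ε + 1 + (n₂ - 1) * p)) * (γ11 - γ12)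
      - lam * (n₂ - 1) * p * (γ21 - γ22)
      = lam * (p - ε) * γ12 * (n₁ - n₂ - 1 - lam * ((n₁ - 1) * ε + 1 + (n₂ - 1) * p)) := by
  linear_combination h.eq11 - h.eq12 - lam * ((n₁ - 1) * ε + 1 + (n₂ - 1) * p) * h.cross_sub

theorem sub_relation_coeff_bounds (hn₁ : 2 ≤ n₁) (hn₂ : 2 ≤ n₂) (hε : ε ∈ Set.Icc (0 : ℝ) 1)
    (hp : p ∈ Set.Icc (0 : ℝ) 1) (hlam : 0 ≤ lam) (hlam₁ : lam * (n₁ + n₂ - 1) < 1) :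
    0 ≤ lam * (n₂ - 1) * p ∧
      lam * (n₂ - 1) * p < 1 - lam * ((n₁ - 2) * p + 1) +
        lam * (1 - lam * (1 - p)) * ((n₁ - 1) * ε + 1 + (n₂ - 1) * p) := by
  obtain ⟨hε₀, hε₁⟩ := hε
  obtain ⟨hp₀, hp₁⟩ := hp
  have hc : 0 ≤ lam * (1 - lam * (1 - p)) := mul_nonneg hlam (by nlinarith)
  have hcr : 0 ≤ lam * (1 - lam * (1 - p)) * ((n₁ - 1) * ε + 1 + (n₂ - 1) * p) :=
    mul_nonneg hc (by nlinarith)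
  have hrow : lam * ((n₁ - 2) * p + 1 + (n₂ - 1) * p) < 1 :=
    (mul_le_mul_of_nonneg_left (by nlinarith) hlam).trans_lt hlam₁
  refine ⟨mul_nonneg (mul_nonneg hlam (by linarith)) hp₀, by linarith⟩

theorem cross_eq_of_eq {n : ℝ} (h : IsBlockEquilibrium n n ε p lam γ11 γ12 γ21 γ22)
    (hn : 1 ≤ n) (hε : 0 ≤ ε) (hp : 0 ≤ p) (hlam : 0 ≤ lam)
    (hlam₁ : lam * ((n - 2) * p + 1) < 1) : γ12 = γ21 := by
  have hdet : 0 < (1 - lam * ((n - 2) * p + 1)) * (1 + lam * ((n - 1) * ε + 1))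
      + lam ^ 2 * n * (n - 1) * p * ε := by
    have : 0 ≤ lam * ((n - 1) * ε + 1) := mul_nonneg hlam (by nlinarith)
    have : 0 ≤ lam ^ 2 * n * (n - 1) * p * ε := by
      have : 0 ≤ n - 1 := by linarith
      positivity
    nlinarith
  have : ((1 - lam * ((n - 2) * p + 1)) * (1 + lam * ((n - 1) * ε + 1))
      + lam ^ 2 * n * (n - 1) * p * ε) * (γ12 - γ21) = 0 := by
    linear_combination (1 - lam * ((n - 2) * p + 1)) * (h.eq12 - h.eq21)
      - lam * (n - 1) * p * (h.eq11 - h.eq22)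
  have := (mul_eq_zero.1 this).resolve_left hdet.ne'
  linarith

theorem lt_of_add_two_le (h : IsBlockEquilibrium n₁ n₂ ε p lam γ11 γ12 γ21 γ22)
    (hn₂ : 2 ≤ n₂) (hn : n₂ + 2 ≤ n₁) (hε : 0 ≤ ε) (hεp : ε < p) (hp : p ≤ 1) (hlam : 0 < lam)
    (hlam₁ : lam * (n₁ + n₂ - 1) < 1) : γ12 < γ11 ∧ γ22 < γ21 := by
  have hε' : ε ∈ Set.Icc (0 : ℝ) 1 := ⟨hε, by linarith⟩
  have hp' : p ∈ Set.Icc (0 : ℝ) 1 := ⟨by linarith, hp⟩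
  obtain ⟨-, hγ12, hγ21, -⟩ := h.one_le (by linarith) hn₂ hε' hp' hlam.le hlam₁.le
  obtain ⟨hB, hBA⟩ := sub_relation_coeff_bounds (by linarith) hn₂ hε' hp' hlam.le hlam₁
  obtain ⟨hC, hCD⟩ := sub_relation_coeff_bounds (n₁ := n₂) (n₂ := n₁) hn₂ (by linarith) hε' hp'
    hlam.le (by linarith)
  have hr₁ : lam * ((n₁ - 1) * ε + 1 + (n₂ - 1) * p) < 1 :=
    (mul_le_mul_of_nonneg_left (by nlinarith) hlam.le).trans_lt hlam₁
  have hR₁ : 0 < lam * (p - ε) * γ12 * (n₁ - n₂ - 1 - lam * ((n₁ - 1) * ε + 1 + (n₂ - 1) * p)) :=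
    mul_pos (mul_pos (mul_pos hlam (sub_pos.2 hεp)) (by linarith)) (by linarith)
  have hR₂ : 0 < lam * (p - ε) * γ21 * (n₁ - n₂ + 1 + lam * ((n₂ - 1) * ε + 1 + (n₁ - 1) * p)) :=
    mul_pos (mul_pos (mul_pos hlam (sub_pos.2 hεp)) (by linarith)) (by nlinarith)
  obtain ⟨hu, hv⟩ := pos_and_pos_of_det_pos (hB.trans_lt hBA) (hC.trans_lt hCD) hB hC
    (mul_lt_mul'' hBA hCD hB hC) (h.sub_relation ▸ hR₁) (by linarith [h.swap.sub_relation])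
  exact ⟨sub_pos.1 hu, sub_pos.1 hv⟩

theorem lt_of_eq {n : ℝ} (h : IsBlockEquilibrium n n ε p lam γ11 γ12 γ21 γ22) (hn : 2 ≤ n)
    (hε : 0 ≤ ε) (hεp : ε < p) (hp : p ≤ 1) (hlam : 0 < lam) (hlam₁ : lam * (n + n - 1) < 1) :
    γ11 < γ12 ∧ γ22 < γ21 := by
  obtain ⟨-, hγ12, hγ21, -⟩ := h.one_le hn hn ⟨hε, by linarith⟩ ⟨by linarith, hp⟩
    hlam.le hlam₁.le
  have hcross : γ12 = γ21 := h.cross_eq_of_eq (by linarith) hε (by linarith) hlam.le (by nlinarith)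
  have hc : 0 ≤ 1 - lam * (1 - p) := by nlinarith
  have hdrift : 0 < lam * (p - ε) := mul_pos hlam (sub_pos.2 hεp)
  have e₁ := h.cross_sub
  have e₂ := h.swap.cross_sub
  rw [hcross, sub_self] at e₁
  rw [← hcross, sub_self] at e₂
  constructor
  · have : (1 - lam * (1 - p)) * (γ11 - γ12) < 0 := by nlinarith
    exact sub_neg.1 (neg_of_mul_neg_right this hc)
  · have : (1 - lam * (1 - p)) * (γ22 - γ21) < 0 := by nlinarith
    exact sub_neg.1 (neg_of_mul_neg_right this hc)

end IsBlockEquilibrium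

/-- Lemma 3: For the two-group stochastic block system with group sizes
`n₁, n₂ ≥ 3`, intra-group probability `p`, inter-group probability `ε`,
`0 ≤ ε < p ≤ 1`, `0 < λ < 1/(n₁ + n₂ - 1)`, and `(γ₁₁, γ₁₂, γ₂₁, γ₂₂)` solving the
system: if `n₁ ≥ n₂ + 2` then `γ₁₁ > γ₁₂` and `γ₂₂ < γ₂₁`; if `n₂ ≥ n₁ + 2` then
`γ₁₁ < γ₁₂` and `γ₂₂ > γ₂₁`; if `n₁ = n₂` then `γ₁₁ < γ₁₂` and `γ₂₂ < γ₂₁`. -/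
theorem stmt_18 (n₁ n₂ : ℕ) (hn₁ : 3 ≤ n₁) (hn₂ : 3 ≤ n₂)
    (ε p lam : ℝ) (hε0 : 0 ≤ ε) (hεp : ε < p) (hp1 : p ≤ 1)
    (hlam0 : 0 < lam) (hlam1 : lam < 1 / ((n₁ : ℝ) + (n₂ : ℝ) - 1))
    (γ11 γ12 γ21 γ22 : ℝ)
    (h11 : γ11 = 1 + lam * γ11 * (((n₁ : ℝ) - 2) * p + 1) + lam * γ12 * (n₂ : ℝ) * ε)
    (h12 : γ12 = 1 + lam * γ21 * (((n₁ : ℝ) - 1) * ε + 1) +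
      lam * γ22 * ((n₂ : ℝ) - 1) * p)
    (h21 : γ21 = 1 + lam * γ11 * ((n₁ : ℝ) - 1) * p +
      lam * γ12 * (((n₂ : ℝ) - 1) * ε + 1))
    (h22 : γ22 = 1 + lam * γ21 * (n₁ : ℝ) * ε +
      lam * γ22 * (((n₂ : ℝ) - 2) * p + 1)) :
    (n₁ ≥ n₂ + 2 → γ11 > γ12 ∧ γ22 < γ21) ∧
    (n₂ ≥ n₁ + 2 → γ11 < γ12 ∧ γ22 > γ21) ∧
    (n₁ = n₂ → γ11 < γ12 ∧ γ22 < γ21) := by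
  have h : IsBlockEquilibrium n₁ n₂ ε p lam γ11 γ12 γ21 γ22 := ⟨h11, h12, h21, h22⟩
  have hn₁' : (2 : ℝ) ≤ n₁ := by norm_cast; omega
  have hn₂' : (2 : ℝ) ≤ n₂ := by norm_cast; omega
  have hlam₁ : lam * (n₁ + n₂ - 1) < 1 := by
    rwa [lt_div_iff₀ (by linarith)] at hlam1
  refine ⟨fun hn => ?_, fun hn => ?_, fun hn => ?_⟩
  · exact h.lt_of_add_two_le hn₂' (by exact_mod_cast hn) hε0 hεp hp1 hlam0 hlam₁
  · obtain ⟨h₂₁, h₁₁⟩ := h.swap.lt_of_add_two_le hn₁' (by exact_mod_cast hn) hε0 hεp hp1 hlam0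
      (by linarith)
    exact ⟨h₁₁, h₂₁⟩
  · subst hn
    exact h.lt_of_eq hn₁' hε0 hεp hp1 hlam0 hlam₁
end
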